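/- arXiv:2509.12085 — 4 statements merged into one kernel-verified Lean document; each statement's English description precedes it below -/
import Mathlib

section
/- Compositional AVOID-shield soundness (main theorem, 'if' direction): Let S_1, …, S_n ⊆ S be core state sets with S = ⋃_{i=1}^n S_i (state cover), and suppose (I₀ ∩ S_i) ∩ AVOID_i = ∅ for every i (initialization safety). Let each ν_i : Set S → Set A be a one-step AVOID_i-sub-shield, and define the composed global shield by ν(B) = ⋂_{i=1}^n ν_i(B ∩ Ŝ_i). Then for every ν-admissible trace h, σ(h) ∩ AVOID = ∅; that is, no trace allowed by the composed shield can ever visit a state in AVOID. -/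
open Set

variable {S A Z : Type*}

/-- Belief-support update: states reachable in one step from `B` under action `a`
consistent with observation `z`. -/
def Update (T : S → A → S → Prop) (Obs : Z → S → Prop) (B : Set S) (a : A) (z : Z) : Set S :=
  {s' | ∃ s ∈ B, T s a s' ∧ Obs z s'}

/-- State estimator: `Estimate T Obs I₀ [] = I₀` and
`Estimate T Obs I₀ (h ++ [(a, z)]) = Update T Obs (Estimate T Obs I₀ h) a z`. -/
def Estimate (T : S → A → S → Prop) (Obs : Z → S → Prop) (I₀ : Set S)
    (h : List (A × Z)) : Set S :=
  h.foldl (fun B p => Update T Obs B p.1 p.2) I₀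

/-- A trace `h` is `ν`-admissible (w.r.t. the estimator determined by `T, Obs, I₀`)
if every action along the trace is allowed by `ν` at the current belief support. -/
def Admissible (T : S → A → S → Prop) (Obs : Z → S → Prop) (I₀ : Set S)
    (ν : Set S → Set A) (h : List (A × Z)) : Prop :=
  ∀ (h' : List (A × Z)) (a : A) (z : Z),
    (h' ++ [(a, z)]) <+: h → a ∈ ν (Estimate T Obs I₀ h')

/-- Successor set of a core state set. -/
def Succ (T : S → A → S → Prop) (Si : Set S) : Set S :=
  {s' | ∃ s ∈ Si, ∃ a, T s a s'}

/-- Extended state set `Ŝᵢ = Sᵢ ∪ succ(Sᵢ)`. -/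
def ExtStates (T : S → A → S → Prop) (Si : Set S) : Set S :=
  Si ∪ Succ T Si

/-- Local belief-support update of the submodel with core state set `Si`. -/
def UpdateLoc (T : S → A → S → Prop) (Obs : Z → S → Prop) (Si : Set S)
    (B : Set S) (a : A) (z : Z) : Set S :=
  {s' | ∃ s ∈ B ∩ Si, T s a s' ∧ Obs z s'}

/-- `νi` is a one-step `AVOIDᵢ`-sub-shield for the submodel with core state set `Si`,
where `AVOIDᵢ = AVOID ∩ Ŝᵢ`. -/
def SubShield (T : S → A → S → Prop) (Obs : Z → S → Prop) (Si AVOID : Set S)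
    (νi : Set S → Set A) : Prop :=
  ∀ B : Set S, (B ∩ ExtStates T Si) ∩ (AVOID ∩ ExtStates T Si) = ∅ →
    ∀ a ∈ νi (B ∩ ExtStates T Si), ∀ z : Z,
      UpdateLoc T Obs Si B a z ∩ (AVOID ∩ ExtStates T Si) = ∅

/-- Compositional AVOID-shield soundness ('if' direction). -/
theorem compositional_avoid_shield_sound
    {S A Z : Type*} [Fintype S] [Fintype A] [Fintype Z]
    (T : S → A → S → Prop) (Obs : Z → S → Prop) (I₀ : Set S) (AVOID : Set S)
    (n : ℕ) (Si : Fin n → Set S)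
    (hcover : (⋃ i, Si i) = Set.univ)
    (hinit : ∀ i, (I₀ ∩ Si i) ∩ (AVOID ∩ ExtStates T (Si i)) = ∅)
    (ν : Fin n → (Set S → Set A))
    (hshield : ∀ i, SubShield T Obs (Si i) AVOID (ν i))
    (h : List (A × Z))
    (hadm : Admissible T Obs I₀ (fun B => ⋂ i, ν i (B ∩ ExtStates T (Si i))) h) :
    Estimate T Obs I₀ h ∩ AVOID = ∅ := by
  induction h using List.reverseRecOn with
  | nil =>
    ext s; simp only [Set.mem_inter_iff, Set.mem_empty_iff_false, iff_false, not_and]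
    intro hs hA
    have hu : s ∈ (⋃ i, Si i) := hcover ▸ Set.mem_univ s
    obtain ⟨_, ⟨i, rfl⟩, hi⟩ := hu
    have := hinit i
    have : s ∈ (I₀ ∩ Si i) ∩ (AVOID ∩ ExtStates T (Si i)) :=
      ⟨⟨hs, hi⟩, hA, Or.inl hi⟩
    simp [hinit i] at this
  | append_singleton h p ih =>
    have hadm' : Admissible T Obs I₀ (fun B => ⋂ i, ν i (B ∩ ExtStates T (Si i))) h := by
      intro h' a z hpre
      exact hadm h' a z (hpre.trans ⟨[p], by simp⟩)
    have hB := ih hadm'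
    set B := Estimate T Obs I₀ h with hBdef
    obtain ⟨a, z⟩ := p
    have ha : a ∈ ⋂ i, ν i (B ∩ ExtStates T (Si i)) :=
      hadm h a z ⟨[], by simp⟩
    have hest : Estimate T Obs I₀ (h ++ [(a, z)]) = Update T Obs B a z := by
      simp [Estimate, List.foldl_append, hBdef]
    rw [hest]
    ext s'; simp only [Set.mem_inter_iff, Set.mem_empty_iff_false, iff_false, not_and]
    rintro ⟨s, hsB, hT, hO⟩ hA
    have hu : s ∈ (⋃ i, Si i) := hcover ▸ Set.mem_univ s
    obtain ⟨_, ⟨i, rfl⟩, hi⟩ := hu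
    have hdisj : (B ∩ ExtStates T (Si i)) ∩ (AVOID ∩ ExtStates T (Si i)) = ∅ := by
      rw [Set.eq_empty_iff_forall_notMem]
      rintro x ⟨⟨hx1, _⟩, ⟨hx2, _⟩⟩
      have : x ∈ B ∩ AVOID := ⟨hx1, hx2⟩
      simp [hB] at this
    have hai : a ∈ ν i (B ∩ ExtStates T (Si i)) := Set.mem_iInter.mp ha i
    have hcon := hshield i B hdisj a hai z
    have : s' ∈ UpdateLoc T Obs (Si i) B a z ∩ (AVOID ∩ ExtStates T (Si i)) :=
      ⟨⟨s, ⟨hsB, hi⟩, hT, hO⟩, hA, Or.inr ⟨s, hi, a, hT⟩⟩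
    simp [hcon] at this
end

section
/- Compositional inductive step: Suppose S = ⋃_{i=1}^n S_i (state cover) and each ν_i is a one-step AVOID_i-sub-shield. If B ⊆ S satisfies B ∩ AVOID = ∅ and a ∈ ⋂_{i=1}^n ν_i(B ∩ Ŝ_i), then for every observation z, Update(B, a, z) ∩ AVOID = ∅. -/
open Set

variable {S A Z : Type*}

/-- Compositional inductive step. -/
theorem compositional_inductive_step
    {S A Z : Type*} [Fintype S] [Fintype A] [Fintype Z]
    (T : S → A → S → Prop) (Obs : Z → S → Prop) (AVOID : Set S)
    (n : ℕ) (Si : Fin n → Set S)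
    (hcover : (⋃ i, Si i) = Set.univ)
    (ν : Fin n → (Set S → Set A))
    (hshield : ∀ i, SubShield T Obs (Si i) AVOID (ν i))
    (B : Set S) (hB : B ∩ AVOID = ∅)
    (a : A) (ha : a ∈ ⋂ i, ν i (B ∩ ExtStates T (Si i)))
    (z : Z) :
    Update T Obs B a z ∩ AVOID = ∅ := by
  ext s'
  simp only [Set.mem_inter_iff, Set.mem_empty_iff_false, iff_false, not_and]
  rintro ⟨s, hsB, hT, hObs⟩ hA
  have hs : s ∈ ⋃ i, Si i := hcover ▸ Set.mem_univ s
  obtain ⟨_, ⟨i, rfl⟩, hsi⟩ := hs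
  have hdisj : (B ∩ ExtStates T (Si i)) ∩ (AVOID ∩ ExtStates T (Si i)) = ∅ := by
    apply Set.eq_empty_of_subset_empty
    rw [← hB]
    rintro x ⟨⟨hx1, _⟩, hx2, _⟩
    exact ⟨hx1, hx2⟩
  have hai : a ∈ ν i (B ∩ ExtStates T (Si i)) := Set.mem_iInter.mp ha i
  have := hshield i B hdisj a hai z
  have hloc : s' ∈ UpdateLoc T Obs (Si i) B a z := ⟨s, ⟨hsB, hsi⟩, hT, hObs⟩
  have hext : s' ∈ ExtStates T (Si i) := Or.inr ⟨s, hsi, a, hT⟩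
  exact absurd this (by rw [Set.eq_empty_iff_forall_notMem]; push_neg; exact ⟨s', hloc, hA, hext⟩)
end

section
/- Multi-step belief-support consistency, soundness direction: Suppose S = ⋃_{i=1}^n S_i (state cover), and suppose for each i a submodel estimator σ_i mapping traces to subsets of S satisfies σ_i([]) ⊇ I₀ ∩ S_i and, for every trace h, action a, and observation z, σ_i(h ++ [(a, z)]) ⊇ {s' | ∃ s ∈ (⋃_{j=1}^n σ_j(h)) ∩ S_i, T s a s' ∧ Obs z s'} (information sharing across submodels). Then for every trace h, σ(h) ⊆ ⋃_{i=1}^n σ_i(h); i.e., the union of submodel belief supports is a sound overapproximation of the global belief support. -/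
open Set

variable {S A Z : Type*}

/-- Multi-step belief-support consistency, soundness direction. -/
theorem compositional_estimator_sound
    {S A Z : Type*} [Fintype S] [Fintype A] [Fintype Z]
    (T : S → A → S → Prop) (Obs : Z → S → Prop) (I₀ : Set S)
    (n : ℕ) (Si : Fin n → Set S)
    (hcover : (⋃ i, Si i) = Set.univ)
    (σi : Fin n → List (A × Z) → Set S)
    (hinit : ∀ i, I₀ ∩ Si i ⊆ σi i [])
    (hstep : ∀ i (h : List (A × Z)) (a : A) (z : Z),
      {s' | ∃ s ∈ (⋃ j, σi j h) ∩ Si i, T s a s' ∧ Obs z s'} ⊆ σi i (h ++ [(a, z)]))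
    (h : List (A × Z)) :
    Estimate T Obs I₀ h ⊆ ⋃ i, σi i h := by
  induction h using List.reverseRecOn with
  | nil =>
    intro s hs
    obtain ⟨i, hi⟩ : ∃ i, s ∈ Si i := by
      have : s ∈ ⋃ i, Si i := hcover ▸ Set.mem_univ s
      simpa using this
    exact Set.mem_iUnion.2 ⟨i, hinit i ⟨hs, hi⟩⟩
  | append_singleton h p ih =>
    intro s' hs'
    have hE : Estimate T Obs I₀ (h ++ [p]) = Update T Obs (Estimate T Obs I₀ h) p.1 p.2 := by
      simp [Estimate, List.foldl_append]
    rw [hE] at hs'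
    obtain ⟨s, hsB, hT, hO⟩ := hs'
    obtain ⟨i, hi⟩ : ∃ i, s ∈ Si i := by
      have : s ∈ ⋃ i, Si i := hcover ▸ Set.mem_univ s
      simpa using this
    exact Set.mem_iUnion.2 ⟨i, hstep i h p.1 p.2 ⟨s, ⟨ih hsB, hi⟩, hT, hO⟩⟩
end

section
/- Shield transfer from an overapproximating partial model: Let (T, Obs, I₀) be the true POMDP graph structure and (T', Obs', I₀') a partial model overapproximating it (T s a s' → T' s a s', Obs z s' → Obs' z s', and I₀ ⊆ I₀'), with state estimators σ and σ' respectively. Let AVOID ⊆ S and let ν : Set S → Set A be a permissive policy such that every trace h that is ν-admissible with respect to σ' satisfies σ'(h) ∩ AVOID = ∅. Then every trace h that is ν-admissible with respect to σ' also satisfies σ(h) ∩ AVOID = ∅; i.e., a shield that is safe for the partial model, executed with the partial-model state estimator, guarantees that the true belief support never intersects AVOID. -/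
open Set

variable {S A Z : Type*}

/-- Shield transfer from an overapproximating partial model. -/
theorem shield_transfer
    {S A Z : Type*} [Fintype S] [Fintype A] [Fintype Z]
    (T T' : S → A → S → Prop) (Obs Obs' : Z → S → Prop) (I₀ I₀' : Set S)
    (hT : ∀ s a s', T s a s' → T' s a s')
    (hObs : ∀ z s', Obs z s' → Obs' z s')
    (hI : I₀ ⊆ I₀')
    (AVOID : Set S) (ν : Set S → Set A)
    (hsafe : ∀ h : List (A × Z), Admissible T' Obs' I₀' ν h →
      Estimate T' Obs' I₀' h ∩ AVOID = ∅)
    (h : List (A × Z)) (hadm : Admissible T' Obs' I₀' ν h) :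
    Estimate T Obs I₀ h ∩ AVOID = ∅ := by
  have mono : ∀ (h : List (A × Z)) (B B' : Set S), B ⊆ B' →
      Estimate T Obs B h ⊆ Estimate T' Obs' B' h := by
    intro h
    induction h with
    | nil => intro B B' hBB; exact hBB
    | cons p t ih =>
      intro B B' hBB
      apply ih
      rintro s' ⟨s, hs, ht, ho⟩
      exact ⟨s, hBB hs, hT _ _ _ ht, hObs _ _ ho⟩
  have := hsafe h hadm
  apply Set.eq_empty_of_subset_empty
  intro x ⟨hx, ha⟩
  rw [← this]
  exact ⟨mono h I₀ I₀' hI hx, ha⟩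
end
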